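/- For every θ ∈ (0,1) and every real μ ≥ 1 there exists a constant C > 0, independent of n, such that for every integer n ≥ 1 and every vector u ∈ ℝⁿ with nonnegative entries, N_{θ,n}((𝔏_n u)^μ) ≤ C · N_{θ,n}(𝔏_n(u^μ)), where (𝔏_n u)^μ denotes the pointwise μ-th power of the function 𝔏_n u and u^μ ∈ ℝⁿ denotes the vector with entries u_i^μ. (The Sobolev–Slobodeckii seminorm of the μ-th power of the piecewise-linear interpolant is dominated by that of the interpolant of the pointwise powers.) -/

import Mathlib

/-!
On each cell `Δ_i` the interpolant `𝔏_n u` is affine between nonnegative nodal values `c, d`,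
so by convexity of `t ↦ t^μ` the function `(𝔏_n u)^μ` is Lipschitz on `Δ_i` with constant
`μ s_i`, where `s_i = (n+1)|d^μ - c^μ|` is the slope of `𝔏_n(u^μ)` on `Δ_i`. On two adjacent
cells it is therefore Lipschitz with constant `μ (s_i + s_j)`, and each term of
`N_{θ,n}((𝔏_n u)^μ)²` is at most `μ² (s_i + s_j)² ∬_{[0,2h]²} |x - y|^{1-2θ}`. The diagonal terms
of `N_{θ,n}(𝔏_n(u^μ))²` are exactly `s_i² ∬_{[0,h]²} |x - y|^{1-2θ}`, the two kernel integrals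
differ by the factor `2^{3-2θ}`, and every cell has at most three neighbours, so
`C² = 12 ⬝ 2^{3-2θ} μ²` works.
-/

open MeasureTheory

/-- The continuous piecewise-linear interpolant `𝔏_n u : [0,1] → ℝ` of a vector
`u` (entries `u 1, …, u n`, with the convention `u₀ = u_{n+1} = 0`): it is affine on
each cell `Δ_i = [i h_n, (i+1) h_n]`, `h_n = 1/(n+1)`, and takes value `u i` at `i h_n`. -/
noncomputable def linInterp (n : ℕ) (u : ℕ → ℝ) : ℝ → ℝ := fun x =>
  ∑ i ∈ Finset.Icc 1 n, u i * max 0 (1 - |((n : ℝ) + 1) * x - (i : ℝ)|)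

/-- The squared truncated Gagliardo seminorm
`N_{θ,n}(f)² = ∑_{|i-j|≤1, 0≤i,j≤n} ∬_{Δ_i×Δ_j} |f(x)-f(y)|²/|x-y|^{1+2θ} dx dy`,
with cells `Δ_i = [i h_n, (i+1) h_n]`, `h_n = 1/(n+1)`. -/
noncomputable def gagliardoSq (θ : ℝ) (n : ℕ) (f : ℝ → ℝ) : ℝ :=
  ∑ i ∈ Finset.range (n + 1), ∑ j ∈ Finset.range (n + 1),
    if i ≤ j + 1 ∧ j ≤ i + 1 then
      ∫ x in Set.Icc ((i : ℝ) / ((n : ℝ) + 1)) (((i : ℝ) + 1) / ((n : ℝ) + 1)),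
        ∫ y in Set.Icc ((j : ℝ) / ((n : ℝ) + 1)) (((j : ℝ) + 1) / ((n : ℝ) + 1)),
          |f x - f y| ^ 2 / |x - y| ^ (1 + 2 * θ)
    else 0

/-- The truncated Gagliardo seminorm `N_{θ,n}(f)`. -/
noncomputable def gagliardo (θ : ℝ) (n : ℕ) (f : ℝ → ℝ) : ℝ :=
  Real.sqrt (gagliardoSq θ n f)

section RpowInequalities

variable {μ : ℝ}

lemma rpow_sub_rpow_le_mul_sub (hμ : 1 ≤ μ) {c d : ℝ} (hc : 0 ≤ c) (hcd : c ≤ d) :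
    d ^ μ - c ^ μ ≤ μ * d ^ (μ - 1) * (d - c) := by
  rcases hcd.eq_or_lt with rfl | hlt
  · simp
  have hderiv : HasDerivAt (fun x : ℝ => x ^ μ) (μ * d ^ (μ - 1)) d :=
    Real.hasDerivAt_rpow_const (Or.inr hμ)
  have hslope := (convexOn_rpow hμ).slope_le_of_hasDerivAt (Set.mem_Ici.2 hc)
    (Set.mem_Ici.2 (hc.trans hcd)) hlt hderiv
  rw [slope_def_field, div_le_iff₀ (sub_pos.2 hlt)] at hslope
  exact hslope

lemma rpow_mul_sub_le_rpow_sub_rpow (hμ : 1 ≤ μ) {c d : ℝ} (hc : 0 ≤ c) (hcd : c ≤ d) :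
    d ^ (μ - 1) * (d - c) ≤ d ^ μ - c ^ μ := by
  have hsplit : ∀ x : ℝ, 0 ≤ x → x ^ μ = x ^ (μ - 1) * x := fun x hx => by
    rw [← Real.rpow_add_one' hx (by linarith), sub_add_cancel]
  have hc' : c ^ (μ - 1) * c ≤ d ^ (μ - 1) * c :=
    mul_le_mul_of_nonneg_right (Real.rpow_le_rpow hc hcd (by linarith)) hc
  rw [hsplit c hc, hsplit d (hc.trans hcd)]
  linarith

lemma abs_rpow_sub_rpow_le (hμ : 1 ≤ μ) {p r M : ℝ} (hp : 0 ≤ p) (hr : 0 ≤ r)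
    (hpM : p ≤ M) (hrM : r ≤ M) : |p ^ μ - r ^ μ| ≤ μ * M ^ (μ - 1) * |p - r| := by
  wlog hrp : r ≤ p generalizing p r
  · rw [abs_sub_comm, abs_sub_comm p]
    exact this hr hp hrM hpM (le_of_not_ge hrp)
  rw [abs_of_nonneg (sub_nonneg.2 (Real.rpow_le_rpow hr hrp (by linarith))),
    abs_of_nonneg (sub_nonneg.2 hrp)]
  calc p ^ μ - r ^ μ ≤ μ * p ^ (μ - 1) * (p - r) := rpow_sub_rpow_le_mul_sub hμ hr hrp
    _ ≤ μ * M ^ (μ - 1) * (p - r) := by gcongr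

lemma max_rpow_mul_abs_sub_le (hμ : 1 ≤ μ) {c d : ℝ} (hc : 0 ≤ c) (hd : 0 ≤ d) :
    max c d ^ (μ - 1) * |d - c| ≤ |d ^ μ - c ^ μ| := by
  wlog hcd : c ≤ d generalizing c d
  · rw [max_comm, abs_sub_comm, abs_sub_comm (d ^ μ)]
    exact this hd hc (le_of_not_ge hcd)
  rw [max_eq_right hcd, abs_of_nonneg (sub_nonneg.2 hcd),
    abs_of_nonneg (sub_nonneg.2 (Real.rpow_le_rpow hc hcd (by linarith)))]
  exact rpow_mul_sub_le_rpow_sub_rpow hμ hc hcd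

/-- This is why the slope of `(linInterp n u)^μ` on a cell is at most `μ` times that of
`linInterp n (u^μ)`. -/
lemma abs_rpow_sub_rpow_le_of_abs_sub_eq (hμ : 1 ≤ μ) {c d p r κ : ℝ} (hc : 0 ≤ c) (hd : 0 ≤ d)
    (hp : p ∈ Set.Icc 0 (max c d)) (hr : r ∈ Set.Icc 0 (max c d)) (hκ : 0 ≤ κ)
    (hpr : |p - r| = κ * |d - c|) :
    |p ^ μ - r ^ μ| ≤ μ * κ * |d ^ μ - c ^ μ| := by
  calc |p ^ μ - r ^ μ| ≤ μ * max c d ^ (μ - 1) * |p - r| :=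
        abs_rpow_sub_rpow_le hμ hp.1 hr.1 hp.2 hr.2
    _ = μ * κ * (max c d ^ (μ - 1) * |d - c|) := by rw [hpr]; ring
    _ ≤ μ * κ * |d ^ μ - c ^ μ| := by
      gcongr
      exact max_rpow_mul_abs_sub_le hμ hc hd

end RpowInequalities

/-- The nodal values of `linInterp n u`, with the boundary convention `u₀ = u_{n+1} = 0`. -/
noncomputable def nodalValue (n : ℕ) (u : ℕ → ℝ) (k : ℕ) : ℝ :=
  if k ∈ Finset.Icc 1 n then u k else 0

/-- The cell `Δ_i`. -/
def cell (n i : ℕ) : Set ℝ :=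
  Set.Icc ((i : ℝ) / ((n : ℝ) + 1)) (((i : ℝ) + 1) / ((n : ℝ) + 1))

/-- The absolute value of the slope of `linInterp n u` on the cell `Δ_i`. -/
noncomputable def cellSlope (n : ℕ) (u : ℕ → ℝ) (i : ℕ) : ℝ :=
  ((n : ℝ) + 1) * |nodalValue n u (i + 1) - nodalValue n u i|

section Interpolant

variable {n : ℕ} {u : ℕ → ℝ}

lemma nodalValue_nonneg (hu : ∀ i ∈ Finset.Icc 1 n, 0 ≤ u i) (k : ℕ) : 0 ≤ nodalValue n u k := by
  unfold nodalValue
  split_ifs with hk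
  exacts [hu k hk, le_rfl]

lemma nodalValue_rpow {μ : ℝ} (hμ : μ ≠ 0) (k : ℕ) :
    nodalValue n (fun i => u i ^ μ) k = nodalValue n u k ^ μ := by
  unfold nodalValue
  split_ifs
  exacts [rfl, (Real.zero_rpow hμ).symm]

lemma cellSlope_nonneg (i : ℕ) : 0 ≤ cellSlope n u i := by
  unfold cellSlope
  positivity

lemma mem_cell {i : ℕ} {x : ℝ} :
    x ∈ cell n i ↔ (i : ℝ) ≤ ((n : ℝ) + 1) * x ∧ ((n : ℝ) + 1) * x ≤ i + 1 := by
  have hN : (0 : ℝ) < n + 1 := by positivity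
  rw [cell, Set.mem_Icc, div_le_iff₀ hN, le_div_iff₀ hN, mul_comm x]

/-- On `[i, i + 1]` the hat function centred at `k` is the barycentric coordinate of the
node `k`. -/
lemma hat_eq_of_mem_Icc {i k : ℕ} {t : ℝ} (ht : t ∈ Set.Icc (0 : ℝ) 1) :
    max 0 (1 - |(i + t) - k|) = (if k = i then 1 - t else 0) + (if k = i + 1 then t else 0) := by
  obtain ⟨ht0, ht1⟩ := ht
  rcases lt_trichotomy k i with hk | rfl | hk
  · have : (k : ℝ) + 1 ≤ i := by exact_mod_cast hk
    rw [if_neg hk.ne, if_neg (by omega), abs_of_nonneg (by linarith)]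
    simp only [add_zero]
    exact max_eq_left (by linarith)
  · rw [if_pos rfl, if_neg (by omega), add_zero, add_sub_cancel_left, abs_of_nonneg ht0]
    exact max_eq_right (by linarith)
  rcases (Nat.succ_le_of_lt hk).eq_or_lt with rfl | hk'
  · rw [if_neg (by omega), if_pos rfl, Nat.cast_succ, zero_add,
      show (i : ℝ) + t - (i + 1) = t - 1 by ring, abs_of_nonpos (by linarith)]
    exact (max_eq_right (by linarith)).trans (by ring)
  · have : (i : ℝ) + 2 ≤ k := by exact_mod_cast hk'
    rw [if_neg (by omega), if_neg (by omega), abs_of_nonpos (by linarith)]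
    simp only [add_zero]
    exact max_eq_left (by linarith)

lemma linInterp_eq_of_mem_cell {i : ℕ} {x : ℝ} (hx : x ∈ cell n i) :
    linInterp n u x = nodalValue n u i
      + (((n : ℝ) + 1) * x - i) * (nodalValue n u (i + 1) - nodalValue n u i) := by
  set t := ((n : ℝ) + 1) * x - i
  have ht : t ∈ Set.Icc (0 : ℝ) 1 := by
    obtain ⟨h1, h2⟩ := mem_cell.1 hx
    constructor <;> linarith
  have hx : ((n : ℝ) + 1) * x = i + t := by ring
  simp only [linInterp, hx, hat_eq_of_mem_Icc ht, mul_add, mul_ite, mul_zero,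
    Finset.sum_add_distrib, Finset.sum_ite_eq', nodalValue]
  split_ifs <;> ring

lemma linInterp_sub_of_mem_cell {i : ℕ} {x y : ℝ} (hx : x ∈ cell n i) (hy : y ∈ cell n i) :
    linInterp n u x - linInterp n u y
      = ((n : ℝ) + 1) * (x - y) * (nodalValue n u (i + 1) - nodalValue n u i) := by
  rw [linInterp_eq_of_mem_cell hx, linInterp_eq_of_mem_cell hy]
  ring

lemma abs_linInterp_sub_of_mem_cell {i : ℕ} {x y : ℝ} (hx : x ∈ cell n i) (hy : y ∈ cell n i) :
    |linInterp n u x - linInterp n u y| = cellSlope n u i * |x - y| := by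
  rw [linInterp_sub_of_mem_cell hx hy, cellSlope, abs_mul, abs_mul,
    abs_of_pos (by positivity : (0 : ℝ) < n + 1)]
  ring

lemma linInterp_mem_Icc_of_mem_cell (hu : ∀ i ∈ Finset.Icc 1 n, 0 ≤ u i) {i : ℕ} {x : ℝ}
    (hx : x ∈ cell n i) :
    linInterp n u x ∈ Set.Icc 0 (max (nodalValue n u i) (nodalValue n u (i + 1))) := by
  obtain ⟨h1, h2⟩ := mem_cell.1 hx
  rw [linInterp_eq_of_mem_cell hx]
  have ha := nodalValue_nonneg hu i
  have hb := nodalValue_nonneg hu (i + 1)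
  have hma := le_max_left (nodalValue n u i) (nodalValue n u (i + 1))
  have hmb := le_max_right (nodalValue n u i) (nodalValue n u (i + 1))
  constructor <;> nlinarith

lemma abs_rpow_linInterp_sub_le_of_mem_cell (hu : ∀ i ∈ Finset.Icc 1 n, 0 ≤ u i) {μ : ℝ}
    (hμ : 1 ≤ μ) {i : ℕ} {x y : ℝ} (hx : x ∈ cell n i) (hy : y ∈ cell n i) :
    |linInterp n u x ^ μ - linInterp n u y ^ μ|
      ≤ μ * cellSlope n (fun k => u k ^ μ) i * |x - y| := by
  have hμ0 : μ ≠ 0 := by positivity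
  have key := abs_rpow_sub_rpow_le_of_abs_sub_eq hμ (nodalValue_nonneg hu i)
    (nodalValue_nonneg hu (i + 1)) (linInterp_mem_Icc_of_mem_cell hu hx)
    (linInterp_mem_Icc_of_mem_cell hu hy) (by positivity : 0 ≤ ((n : ℝ) + 1) * |x - y|)
    (by rw [abs_linInterp_sub_of_mem_cell hx hy, cellSlope]; ring)
  rw [cellSlope, nodalValue_rpow hμ0, nodalValue_rpow hμ0]
  linarith

end Interpolant

lemma abs_sub_le_of_mem_adjacent_cells {n : ℕ} {f : ℝ → ℝ} {K : ℕ → ℝ} (hK : ∀ i, 0 ≤ K i)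
    (hf : ∀ i, ∀ x ∈ cell n i, ∀ y ∈ cell n i, |f x - f y| ≤ K i * |x - y|)
    {i j : ℕ} (hij : i ≤ j + 1) (hji : j ≤ i + 1) {x y : ℝ} (hx : x ∈ cell n i)
    (hy : y ∈ cell n j) :
    |f x - f y| ≤ (K i + K j) * |x - y| := by
  wlog hle : i ≤ j generalizing i j x y
  · rw [abs_sub_comm, abs_sub_comm x, add_comm]
    exact this hji hij hy hx (by omega)
  rcases (show i = j ∨ j = i + 1 by omega) with rfl | rfl
  · nlinarith [hf i x hx y hy, hK i, abs_nonneg (x - y)]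
  set m : ℝ := ((i : ℝ) + 1) / ((n : ℝ) + 1)
  have hmi : m ∈ cell n i := mem_cell.2 (by simp only [m]; field_simp; constructor <;> linarith)
  have hmj : m ∈ cell n (i + 1) := mem_cell.2 (by simp only [m]; field_simp; push_cast; constructor <;> linarith)
  have hxm : x ≤ m := hx.2
  have hmy : m ≤ y := by simpa [cell, m] using hy.1
  have h1 := hf i x hx m hmi
  have h2 := hf (i + 1) m hmj y hy
  rw [abs_of_nonpos (by linarith : x - m ≤ 0)] at h1
  rw [abs_of_nonpos (by linarith : m - y ≤ 0)] at h2
  rw [abs_of_nonpos (by linarith : x - y ≤ 0)]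
  calc |f x - f y| ≤ |f x - f m| + |f m - f y| := abs_sub_le _ _ _
    _ ≤ K i * -(x - m) + K (i + 1) * -(m - y) := add_le_add h1 h2
    _ ≤ (K i + K (i + 1)) * -(x - y) := by nlinarith [hK i, hK (i + 1)]

section KernelIntegrals

variable {q : ℝ}

lemma intervalIntegrable_abs_rpow (hq : -1 < q) (a b : ℝ) :
    IntervalIntegrable (fun t : ℝ => |t| ^ q) volume a b := by
  have hpos : ∀ c : ℝ, 0 ≤ c → IntervalIntegrable (fun t : ℝ => |t| ^ q) volume 0 c :=
    fun c hc => (intervalIntegral.intervalIntegrable_rpow' hq).congr fun t ht => by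
      rw [Set.uIoc_of_le hc] at ht
      simp only [abs_of_pos ht.1]
  have hall : ∀ c : ℝ, IntervalIntegrable (fun t : ℝ => |t| ^ q) volume 0 c := fun c => by
    rcases le_total 0 c with hc | hc
    · exact hpos c hc
    · simpa using (IntervalIntegrable.iff_comp_neg (by simp)).1 (hpos (-c) (by linarith))
  exact (hall a).symm.trans (hall b)

lemma intervalIntegrable_abs_sub_rpow (hq : -1 < q) (x a b : ℝ) :
    IntervalIntegrable (fun y : ℝ => |x - y| ^ q) volume a b := by
  simpa using (intervalIntegrable_abs_rpow hq (x - a) (x - b)).comp_sub_left x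

lemma integral_abs_sub_rpow_of_le (hq : -1 < q) {a x : ℝ} (hax : a ≤ x) :
    ∫ y in a..x, |x - y| ^ q = (x - a) ^ (q + 1) / (q + 1) := by
  rw [intervalIntegral.integral_congr (g := fun y => (x - y) ^ q) fun y hy => by
      rw [Set.uIcc_of_le hax] at hy
      simp only [abs_of_nonneg (sub_nonneg.2 hy.2)],
    intervalIntegral.integral_comp_sub_left (fun t => t ^ q) x, sub_self,
    integral_rpow (Or.inl hq), Real.zero_rpow (by linarith), sub_zero]

lemma integral_abs_sub_rpow_of_ge (hq : -1 < q) {x b : ℝ} (hxb : x ≤ b) :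
    ∫ y in x..b, |x - y| ^ q = (b - x) ^ (q + 1) / (q + 1) := by
  rw [intervalIntegral.integral_congr (g := fun y => (y - x) ^ q) fun y hy => by
      rw [Set.uIcc_of_le hxb] at hy
      simp only [abs_sub_comm x, abs_of_nonneg (sub_nonneg.2 hy.1)],
    intervalIntegral.integral_comp_sub_right (fun t => t ^ q) x, sub_self,
    integral_rpow (Or.inl hq), Real.zero_rpow (by linarith), sub_zero]

lemma integral_Icc_abs_sub_rpow (hq : -1 < q) {a b x : ℝ} (hx : x ∈ Set.Icc a b) :
    ∫ y in Set.Icc a b, |x - y| ^ q = ((x - a) ^ (q + 1) + (b - x) ^ (q + 1)) / (q + 1) := by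
  rw [integral_Icc_eq_integral_Ioc, ← intervalIntegral.integral_of_le (hx.1.trans hx.2),
    ← intervalIntegral.integral_add_adjacent_intervals (intervalIntegrable_abs_sub_rpow hq x a x)
      (intervalIntegrable_abs_sub_rpow hq x x b),
    integral_abs_sub_rpow_of_le hq hx.1, integral_abs_sub_rpow_of_ge hq hx.2, add_div]

/-- `kernelMass q L = ∬_{[0,L]²} |x - y|^q dx dy`. -/
noncomputable def kernelMass (q L : ℝ) : ℝ :=
  2 * L ^ (q + 2) / ((q + 1) * (q + 2))

lemma kernelMass_nonneg (hq : -1 < q) {L : ℝ} (hL : 0 ≤ L) : 0 ≤ kernelMass q L := by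
  unfold kernelMass
  have : 0 < q + 1 := by linarith
  have : 0 < q + 2 := by linarith
  positivity

lemma kernelMass_two_mul {L : ℝ} (hL : 0 ≤ L) :
    kernelMass q (2 * L) = 2 ^ (q + 2) * kernelMass q L := by
  rw [kernelMass, kernelMass, Real.mul_rpow zero_le_two hL]
  ring

lemma integral_Icc_integral_Icc_abs_sub_rpow (hq : -1 < q) {a b : ℝ} (hab : a ≤ b) :
    ∫ x in Set.Icc a b, ∫ y in Set.Icc a b, |x - y| ^ q = kernelMass q (b - a) := by
  have hq1 : q + 1 ≠ 0 := by linarith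
  have hq2 : -1 < q + 1 := by linarith
  have hcont : Continuous fun x : ℝ => (x - a) ^ (q + 1) :=
    (Real.continuous_rpow_const (by linarith)).comp (continuous_sub_right a)
  have hcont' : Continuous fun x : ℝ => (b - x) ^ (q + 1) :=
    (Real.continuous_rpow_const (by linarith)).comp (continuous_sub_left b)
  rw [setIntegral_congr_fun measurableSet_Icc fun x hx => integral_Icc_abs_sub_rpow hq hx,
    integral_Icc_eq_integral_Ioc, ← intervalIntegral.integral_of_le hab,
    intervalIntegral.integral_div, intervalIntegral.integral_add (hcont.intervalIntegrable a b)
      (hcont'.intervalIntegrable a b),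
    intervalIntegral.integral_comp_sub_right (fun t => t ^ (q + 1)) a,
    intervalIntegral.integral_comp_sub_left (fun t => t ^ (q + 1)) b, sub_self, sub_self,
    integral_rpow (Or.inl hq2), Real.zero_rpow (by linarith), kernelMass]
  field_simp
  ring_nf

lemma integrableOn_Icc_integral_Icc_abs_sub_rpow (hq : -1 < q) (a b : ℝ) :
    IntegrableOn (fun x => ∫ y in Set.Icc a b, |x - y| ^ q) (Set.Icc a b) := by
  have hcont : Continuous fun x : ℝ => ((x - a) ^ (q + 1) + (b - x) ^ (q + 1)) / (q + 1) :=
    (((Real.continuous_rpow_const (by linarith)).comp (continuous_sub_right a)).add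
      ((Real.continuous_rpow_const (by linarith)).comp (continuous_sub_left b))).div_const _
  exact hcont.integrableOn_Icc.congr_fun
    (fun x hx => (integral_Icc_abs_sub_rpow hq hx).symm) measurableSet_Icc

end KernelIntegrals

section GagliardoIntegrals

variable {f : ℝ → ℝ} {θ K : ℝ}

lemma sq_mul_abs_div_rpow (K : ℝ) {z : ℝ} (hz : z ≠ 0) :
    (K * |z|) ^ 2 / |z| ^ (1 + 2 * θ) = K ^ 2 * |z| ^ (1 - 2 * θ) := by
  rw [mul_pow, mul_div_assoc, ← Real.rpow_natCast (|z|), ← Real.rpow_sub (abs_pos.2 hz)]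
  ring_nf

lemma sq_abs_sub_div_rpow_le_of_abs_sub_le {x y : ℝ} (hf : |f x - f y| ≤ K * |x - y|) :
    |f x - f y| ^ 2 / |x - y| ^ (1 + 2 * θ) ≤ K ^ 2 * |x - y| ^ (1 - 2 * θ) := by
  rcases eq_or_ne x y with rfl | hxy
  · simp only [sub_self, abs_zero, pow_two, mul_zero, zero_div]
    exact mul_nonneg (mul_self_nonneg K) (Real.rpow_nonneg le_rfl _)
  calc |f x - f y| ^ 2 / |x - y| ^ (1 + 2 * θ)
      ≤ (K * |x - y|) ^ 2 / |x - y| ^ (1 + 2 * θ) := by gcongr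
    _ = K ^ 2 * |x - y| ^ (1 - 2 * θ) := sq_mul_abs_div_rpow K (sub_ne_zero.2 hxy)

lemma setIntegral_setIntegral_gagliardo_le (hθ : θ < 1) {a b : ℝ} (hab : a ≤ b) {s t : Set ℝ}
    (hs : MeasurableSet s) (ht : MeasurableSet t) (hsab : s ⊆ Set.Icc a b)
    (htab : t ⊆ Set.Icc a b) (hf : ∀ x ∈ s, ∀ y ∈ t, |f x - f y| ≤ K * |x - y|) :
    ∫ x in s, ∫ y in t, |f x - f y| ^ 2 / |x - y| ^ (1 + 2 * θ)
      ≤ K ^ 2 * kernelMass (1 - 2 * θ) (b - a) := by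
  have hq : -1 < 1 - 2 * θ := by linarith
  have hinner : ∀ x ∈ s, ∫ y in t, |f x - f y| ^ 2 / |x - y| ^ (1 + 2 * θ)
      ≤ K ^ 2 * ∫ y in Set.Icc a b, |x - y| ^ (1 - 2 * θ) := fun x hx => by
    rw [← integral_const_mul]
    have hint : IntegrableOn (fun y => K ^ 2 * |x - y| ^ (1 - 2 * θ)) (Set.Icc a b) :=
      ((intervalIntegrable_iff_integrableOn_Icc_of_le hab).1
        (intervalIntegrable_abs_sub_rpow hq x a b)).const_mul _
    calc ∫ y in t, |f x - f y| ^ 2 / |x - y| ^ (1 + 2 * θ)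
        ≤ ∫ y in t, K ^ 2 * |x - y| ^ (1 - 2 * θ) :=
          integral_mono_of_nonneg (Filter.Eventually.of_forall fun y => by positivity)
            (hint.mono_set htab) ((ae_restrict_iff' ht).2 (Filter.Eventually.of_forall
              fun y hy => sq_abs_sub_div_rpow_le_of_abs_sub_le (hf x hx y hy)))
      _ ≤ ∫ y in Set.Icc a b, K ^ 2 * |x - y| ^ (1 - 2 * θ) :=
          setIntegral_mono_set hint (Filter.Eventually.of_forall fun y => by positivity)
            htab.eventuallyLE
  have hint : IntegrableOn (fun x => K ^ 2 * ∫ y in Set.Icc a b, |x - y| ^ (1 - 2 * θ))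
      (Set.Icc a b) := (integrableOn_Icc_integral_Icc_abs_sub_rpow hq a b).const_mul _
  have hnonneg : ∀ x, 0 ≤ K ^ 2 * ∫ y in Set.Icc a b, |x - y| ^ (1 - 2 * θ) := fun x =>
    mul_nonneg (sq_nonneg K) (integral_nonneg fun y => by positivity)
  calc ∫ x in s, ∫ y in t, |f x - f y| ^ 2 / |x - y| ^ (1 + 2 * θ)
      ≤ ∫ x in s, K ^ 2 * ∫ y in Set.Icc a b, |x - y| ^ (1 - 2 * θ) :=
        integral_mono_of_nonneg
          (Filter.Eventually.of_forall fun x => integral_nonneg fun y => by positivity)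
          (hint.mono_set hsab) ((ae_restrict_iff' hs).2 (Filter.Eventually.of_forall hinner))
    _ ≤ ∫ x in Set.Icc a b, K ^ 2 * ∫ y in Set.Icc a b, |x - y| ^ (1 - 2 * θ) :=
        setIntegral_mono_set hint (Filter.Eventually.of_forall hnonneg) hsab.eventuallyLE
    _ = K ^ 2 * kernelMass (1 - 2 * θ) (b - a) := by
        rw [integral_const_mul, integral_Icc_integral_Icc_abs_sub_rpow hq hab]

lemma setIntegral_setIntegral_gagliardo_eq (hθ : θ < 1) {a b : ℝ} (hab : a ≤ b)
    (hf : ∀ x ∈ Set.Icc a b, ∀ y ∈ Set.Icc a b, |f x - f y| = K * |x - y|) :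
    ∫ x in Set.Icc a b, ∫ y in Set.Icc a b, |f x - f y| ^ 2 / |x - y| ^ (1 + 2 * θ)
      = K ^ 2 * kernelMass (1 - 2 * θ) (b - a) := by
  have hinner : ∀ x ∈ Set.Icc a b,
      ∫ y in Set.Icc a b, |f x - f y| ^ 2 / |x - y| ^ (1 + 2 * θ)
        = K ^ 2 * ∫ y in Set.Icc a b, |x - y| ^ (1 - 2 * θ) := fun x hx => by
    rw [← integral_const_mul]
    refine setIntegral_congr_ae measurableSet_Icc ?_
    filter_upwards [Measure.ae_ne volume x] with y hyx hy
    rw [hf x hx y hy]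
    exact sq_mul_abs_div_rpow K (sub_ne_zero.2 hyx.symm)
  rw [setIntegral_congr_fun measurableSet_Icc hinner, integral_const_mul,
    integral_Icc_integral_Icc_abs_sub_rpow (by linarith) hab]

end GagliardoIntegrals

lemma card_filter_adjacent_le (N i : ℕ) :
    (Finset.filter (fun j => i ≤ j + 1 ∧ j ≤ i + 1) (Finset.range N)).card ≤ 3 := by
  calc (Finset.filter (fun j => i ≤ j + 1 ∧ j ≤ i + 1) (Finset.range N)).card
      ≤ (Finset.Icc (i - 1) (i + 1)).card :=
        Finset.card_le_card fun j hj => by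
          simp only [Finset.mem_filter] at hj
          simp only [Finset.mem_Icc]
          omega
    _ ≤ 3 := by simp only [Nat.card_Icc]; omega

lemma sum_sum_adjacent_le (N : ℕ) {a : ℕ → ℝ} (ha : ∀ i, 0 ≤ a i) :
    ∑ i ∈ Finset.range N, ∑ j ∈ Finset.range N, (if i ≤ j + 1 ∧ j ≤ i + 1 then a i else 0)
      ≤ 3 * ∑ i ∈ Finset.range N, a i := by
  rw [Finset.mul_sum]
  refine Finset.sum_le_sum fun i _ => ?_
  rw [← Finset.sum_filter, Finset.sum_const, nsmul_eq_mul]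
  exact mul_le_mul_of_nonneg_right (by exact_mod_cast card_filter_adjacent_le N i) (ha i)

lemma sum_sum_adjacent_sq_add_le (N : ℕ) (a : ℕ → ℝ) :
    ∑ i ∈ Finset.range N, ∑ j ∈ Finset.range N,
        (if i ≤ j + 1 ∧ j ≤ i + 1 then (a i + a j) ^ 2 else 0)
      ≤ 12 * ∑ i ∈ Finset.range N, a i ^ 2 := by
  set S := ∑ i ∈ Finset.range N, ∑ j ∈ Finset.range N,
    (if i ≤ j + 1 ∧ j ≤ i + 1 then 2 * a i ^ 2 else 0)
  have hsymm : ∑ i ∈ Finset.range N, ∑ j ∈ Finset.range N,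
      (if i ≤ j + 1 ∧ j ≤ i + 1 then 2 * a j ^ 2 else 0) = S := by
    rw [Finset.sum_comm]
    simp only [S, and_comm]
  calc ∑ i ∈ Finset.range N, ∑ j ∈ Finset.range N,
        (if i ≤ j + 1 ∧ j ≤ i + 1 then (a i + a j) ^ 2 else 0)
      ≤ ∑ i ∈ Finset.range N, ∑ j ∈ Finset.range N,
          ((if i ≤ j + 1 ∧ j ≤ i + 1 then 2 * a i ^ 2 else 0)
            + (if i ≤ j + 1 ∧ j ≤ i + 1 then 2 * a j ^ 2 else 0)) := by
        gcongr with i _ j _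
        split_ifs
        · nlinarith [sq_nonneg (a i - a j)]
        · simp
    _ = 2 * S := by
        rw [Finset.sum_congr rfl fun i _ => Finset.sum_add_distrib, Finset.sum_add_distrib, hsymm,
          two_mul]
    _ ≤ 2 * (3 * ∑ i ∈ Finset.range N, 2 * a i ^ 2) := by
        gcongr
        exact sum_sum_adjacent_le N fun i => by positivity
    _ = 12 * ∑ i ∈ Finset.range N, a i ^ 2 := by rw [← Finset.mul_sum]; ring

noncomputable def cellEnergy (θ : ℝ) (n : ℕ) (f : ℝ → ℝ) (i j : ℕ) : ℝ :=
  ∫ x in cell n i, ∫ y in cell n j, |f x - f y| ^ 2 / |x - y| ^ (1 + 2 * θ)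

section CellEnergy

variable {θ : ℝ} {n : ℕ}

lemma gagliardoSq_eq_sum_cellEnergy (f : ℝ → ℝ) :
    gagliardoSq θ n f = ∑ i ∈ Finset.range (n + 1), ∑ j ∈ Finset.range (n + 1),
      if i ≤ j + 1 ∧ j ≤ i + 1 then cellEnergy θ n f i j else 0 :=
  rfl

lemma cellEnergy_nonneg (f : ℝ → ℝ) (i j : ℕ) : 0 ≤ cellEnergy θ n f i j :=
  integral_nonneg fun _ => integral_nonneg fun _ => by positivity

lemma sum_cellEnergy_self_le_gagliardoSq (f : ℝ → ℝ) :
    ∑ i ∈ Finset.range (n + 1), cellEnergy θ n f i i ≤ gagliardoSq θ n f := by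
  rw [gagliardoSq_eq_sum_cellEnergy]
  refine Finset.sum_le_sum fun i hi => ?_
  calc cellEnergy θ n f i i = if i ≤ i + 1 ∧ i ≤ i + 1 then cellEnergy θ n f i i else 0 :=
        (if_pos ⟨i.le_succ, i.le_succ⟩).symm
    _ ≤ _ := Finset.single_le_sum (f := fun j => if i ≤ j + 1 ∧ j ≤ i + 1 then
        cellEnergy θ n f i j else 0) (fun j _ => by split_ifs <;> simp [cellEnergy_nonneg]) hi

lemma gagliardoSq_le_of_cellEnergy_le {f : ℝ → ℝ} {a : ℕ → ℝ} {c : ℝ} (hc : 0 ≤ c)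
    (h : ∀ i j, i ≤ j + 1 → j ≤ i + 1 → cellEnergy θ n f i j ≤ (a i + a j) ^ 2 * c) :
    gagliardoSq θ n f ≤ 12 * c * ∑ i ∈ Finset.range (n + 1), a i ^ 2 := by
  calc gagliardoSq θ n f
      ≤ ∑ i ∈ Finset.range (n + 1), ∑ j ∈ Finset.range (n + 1),
          (if i ≤ j + 1 ∧ j ≤ i + 1 then (a i + a j) ^ 2 else 0) * c := by
        rw [gagliardoSq_eq_sum_cellEnergy]
        gcongr with i _ j _
        split_ifs with hij
        · exact h i j hij.1 hij.2
        · simp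
    _ = c * ∑ i ∈ Finset.range (n + 1), ∑ j ∈ Finset.range (n + 1),
          (if i ≤ j + 1 ∧ j ≤ i + 1 then (a i + a j) ^ 2 else 0) := by
        rw [mul_comm c, Finset.sum_mul]
        simp only [Finset.sum_mul]
    _ ≤ c * (12 * ∑ i ∈ Finset.range (n + 1), a i ^ 2) := by
        gcongr
        exact sum_sum_adjacent_sq_add_le (n + 1) a
    _ = 12 * c * ∑ i ∈ Finset.range (n + 1), a i ^ 2 := by ring

lemma cell_subset_Icc {i k : ℕ} (hki : k ≤ i) (hik : i ≤ k + 1) :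
    cell n i ⊆ Set.Icc ((k : ℝ) / ((n : ℝ) + 1)) (((k : ℝ) + 2) / ((n : ℝ) + 1)) := by
  have hki' : (k : ℝ) ≤ i := by exact_mod_cast hki
  have hik' : (i : ℝ) ≤ k + 1 := by exact_mod_cast hik
  exact Set.Icc_subset_Icc (by gcongr) (div_le_div_of_nonneg_right (by linarith) (by positivity))

lemma cellEnergy_linInterp_self (hθ : θ < 1) (v : ℕ → ℝ) (i : ℕ) :
    cellEnergy θ n (linInterp n v) i i
      = cellSlope n v i ^ 2 * kernelMass (1 - 2 * θ) (1 / ((n : ℝ) + 1)) := by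
  have hab : (i : ℝ) / ((n : ℝ) + 1) ≤ ((i : ℝ) + 1) / ((n : ℝ) + 1) := by gcongr; linarith
  rw [cellEnergy, cell, setIntegral_setIntegral_gagliardo_eq hθ hab
    fun x hx y hy => abs_linInterp_sub_of_mem_cell hx hy]
  congr 2
  ring

lemma cellEnergy_rpow_linInterp_le {u : ℕ → ℝ} (hu : ∀ i ∈ Finset.Icc 1 n, 0 ≤ u i) {μ : ℝ}
    (hμ : 1 ≤ μ) (hθ : θ < 1) {i j : ℕ} (hij : i ≤ j + 1) (hji : j ≤ i + 1) :
    cellEnergy θ n (fun x => linInterp n u x ^ μ) i j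
      ≤ (μ * cellSlope n (fun k => u k ^ μ) i + μ * cellSlope n (fun k => u k ^ μ) j) ^ 2
        * kernelMass (1 - 2 * θ) (2 * (1 / ((n : ℝ) + 1))) := by
  have hlip : ∀ x ∈ cell n i, ∀ y ∈ cell n j,
      |linInterp n u x ^ μ - linInterp n u y ^ μ| ≤ (μ * cellSlope n (fun k => u k ^ μ) i
        + μ * cellSlope n (fun k => u k ^ μ) j) * |x - y| := fun x hx y hy =>
    abs_sub_le_of_mem_adjacent_cells (fun i => mul_nonneg (by linarith) (cellSlope_nonneg i))
      (fun i x hx y hy => abs_rpow_linInterp_sub_le_of_mem_cell hu hμ hx hy) hij hji hx hy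
  have hab : ((min i j : ℕ) : ℝ) / ((n : ℝ) + 1) ≤ (((min i j : ℕ) : ℝ) + 2) / ((n : ℝ) + 1) := by
    gcongr; linarith
  refine (setIntegral_setIntegral_gagliardo_le (s := cell n i) (t := cell n j) hθ hab
    measurableSet_Icc measurableSet_Icc (cell_subset_Icc (min_le_left i j) (by omega))
    (cell_subset_Icc (min_le_right i j) (by omega)) hlip).trans_eq ?_
  congr 2
  ring

end CellEnergy

lemma gagliardo_le_of_gagliardoSq_le {θ : ℝ} {n : ℕ} {f g : ℝ → ℝ} {C : ℝ} (hC : 0 ≤ C)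
    (h : gagliardoSq θ n f ≤ C ^ 2 * gagliardoSq θ n g) :
    gagliardo θ n f ≤ C * gagliardo θ n g := by
  rw [gagliardo, gagliardo, ← Real.sqrt_sq hC, ← Real.sqrt_mul (sq_nonneg C)]
  exact Real.sqrt_le_sqrt h

theorem stmt14_general (θ : ℝ) (hθ1 : θ < 1) (μ : ℝ) (hμ : 1 ≤ μ) :
    ∃ C : ℝ, 0 < C ∧ ∀ n : ℕ, 1 ≤ n → ∀ u : ℕ → ℝ,
      (∀ i ∈ Finset.Icc 1 n, 0 ≤ u i) →
      gagliardo θ n (fun x => linInterp n u x ^ μ) ≤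
        C * gagliardo θ n (linInterp n fun i => u i ^ μ) := by
  have hq : -1 < 1 - 2 * θ := by linarith
  refine ⟨μ * √(12 * 2 ^ (3 - 2 * θ)), by positivity, fun n _ u hu => ?_⟩
  set s := cellSlope n fun k => u k ^ μ
  set h : ℝ := 1 / ((n : ℝ) + 1)
  have hh : 0 ≤ h := by positivity
  refine gagliardo_le_of_gagliardoSq_le (by positivity) ?_
  calc gagliardoSq θ n (fun x => linInterp n u x ^ μ)
      ≤ 12 * kernelMass (1 - 2 * θ) (2 * h) * ∑ i ∈ Finset.range (n + 1), (μ * s i) ^ 2 :=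
        gagliardoSq_le_of_cellEnergy_le (kernelMass_nonneg hq (by positivity))
          fun i j hij hji => cellEnergy_rpow_linInterp_le hu hμ hθ1 hij hji
    _ = (μ * √(12 * 2 ^ (3 - 2 * θ))) ^ 2
          * ∑ i ∈ Finset.range (n + 1), s i ^ 2 * kernelMass (1 - 2 * θ) h := by
        rw [kernelMass_two_mul hh, show 1 - 2 * θ + 2 = 3 - 2 * θ by ring, mul_pow,
          Real.sq_sqrt (by positivity), Finset.mul_sum, Finset.mul_sum]
        exact Finset.sum_congr rfl fun i _ => by ring
    _ = (μ * √(12 * 2 ^ (3 - 2 * θ))) ^ 2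
          * ∑ i ∈ Finset.range (n + 1), cellEnergy θ n (linInterp n fun k => u k ^ μ) i i := by
        simp only [s, h, cellEnergy_linInterp_self hθ1]
    _ ≤ (μ * √(12 * 2 ^ (3 - 2 * θ))) ^ 2 * gagliardoSq θ n (linInterp n fun i => u i ^ μ) := by
        gcongr
        exact sum_cellEnergy_self_le_gagliardoSq _

/-- For every `θ ∈ (0,1)` and `μ ≥ 1` there is `C > 0`, independent of `n`, such that
for every `n ≥ 1` and every nonnegative vector `u ∈ ℝⁿ`,
`N_{θ,n}((𝔏_n u)^μ) ≤ C ⬝ N_{θ,n}(𝔏_n(u^μ))`, with pointwise powers. -/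
theorem stmt14 (θ : ℝ) (hθ0 : 0 < θ) (hθ1 : θ < 1) (μ : ℝ) (hμ : 1 ≤ μ) :
    ∃ C : ℝ, 0 < C ∧ ∀ n : ℕ, 1 ≤ n → ∀ u : ℕ → ℝ,
      (∀ i ∈ Finset.Icc 1 n, 0 ≤ u i) →
      gagliardo θ n (fun x => linInterp n u x ^ μ) ≤
        C * gagliardo θ n (linInterp n fun i => u i ^ μ) :=
  stmt14_general θ hθ1 μ hμ
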